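/- For c > b > 0, p, q ≥ 0, and any real z, the (p,q)-extended Kummer confluent hypergeometric function satisfies |Φ_{p,q}(b; c; z)| ≤ exp(-(√p + √q)²) · Φ(b; c; |z|), where Φ = ₁F₁ is the classical confluent hypergeometric function. -/

import Mathlib

/-!
For `0 < t < 1` Cauchy–Schwarz gives `(√p + √q)² ≤ (p / t + q / (1 - t)) (t + (1 - t))`, so the
weight `exp (-p / t - q / (1 - t))` in the extended Beta integral is at most
`exp (-(√p + √q)²)`. Hence `|B(b + n, c - b; p, q)| ≤ exp (-(√p + √q)²) B(b + n, c - b)`, and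
`B(b + n, c - b) / B(b, c - b) = (b)ₙ / (c)ₙ` by the Gamma-function formula for `B`. Comparing the
two series term by term gives the bound; the comparison series converges because
`(b)ₙ / (c)ₙ ≤ 1`.
-/

open Real MeasureTheory

/-- The (p,q)-extended Beta function. -/
noncomputable def pqBeta (x y p q : ℝ) : ℝ :=
  ∫ t in (0:ℝ)..1, t ^ (x - 1) * (1 - t) ^ (y - 1) * Real.exp (-p / t - q / (1 - t))

/-- The (p,q)-extended Kummer confluent hypergeometric function. -/
noncomputable def pqKummer (b c z p q : ℝ) : ℝ :=
  ∑' n : ℕ, (pqBeta (b + n) (c - b) p q / pqBeta b (c - b) 0 0) * z ^ n / n.factorial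

/-- The classical confluent hypergeometric function ₁F₁. -/
noncomputable def oneF1 (b c z : ℝ) : ℝ :=
  ∑' n : ℕ, (ascPochhammer ℝ n).eval b / (ascPochhammer ℝ n).eval c * z ^ n / n.factorial

theorem ascPochhammer_eval_nonneg {S : Type*} [Semiring S] [PartialOrder S] [IsOrderedRing S]
    (n : ℕ) {s : S} (hs : 0 ≤ s) : 0 ≤ (ascPochhammer S n).eval s := by
  induction n with
  | zero => simp
  | succ n ih =>
    rw [ascPochhammer_succ_eval]
    exact mul_nonneg ih (add_nonneg hs n.cast_nonneg)

theorem ascPochhammer_eval_le_eval {S : Type*} [Semiring S] [PartialOrder S] [IsOrderedRing S]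
    (n : ℕ) {b c : S} (hb : 0 ≤ b) (hbc : b ≤ c) :
    (ascPochhammer S n).eval b ≤ (ascPochhammer S n).eval c := by
  induction n with
  | zero => simp
  | succ n ih =>
    rw [ascPochhammer_succ_eval, ascPochhammer_succ_eval]
    exact mul_le_mul ih (add_le_add_left hbc _) (add_nonneg hb n.cast_nonneg)
      (ascPochhammer_eval_nonneg n (hb.trans hbc))

theorem Real.Gamma_add_nat_eq_ascPochhammer_mul {x : ℝ} (hx : ∀ k : ℕ, x ≠ -k) (n : ℕ) :
    Gamma (x + n) = (ascPochhammer ℝ n).eval x * Gamma x := by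
  induction n with
  | zero => simp
  | succ n ih =>
    have hxn : x + n ≠ 0 := fun h => hx n (eq_neg_of_add_eq_zero_left h)
    rw [Nat.cast_succ, ← add_assoc, Gamma_add_one hxn, ih, ascPochhammer_succ_eval]
    ring

theorem ofReal_rpow_mul_one_sub_rpow {t : ℝ} (ht₀ : 0 ≤ t) (ht₁ : t ≤ 1) (x y : ℝ) :
    ((t ^ (x - 1) * (1 - t) ^ (y - 1) : ℝ) : ℂ)
      = (t : ℂ) ^ ((x : ℂ) - 1) * (1 - (t : ℂ)) ^ ((y : ℂ) - 1) := by
  rw [Complex.ofReal_mul, Complex.ofReal_cpow ht₀, Complex.ofReal_cpow (sub_nonneg.2 ht₁)]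
  push_cast
  rfl

theorem pqBeta_zero_zero (x y : ℝ) :
    pqBeta x y 0 0 = ∫ t in (0 : ℝ)..1, t ^ (x - 1) * (1 - t) ^ (y - 1) := by
  simp [pqBeta]

theorem betaIntegral_ofReal (x y : ℝ) : Complex.betaIntegral x y = pqBeta x y 0 0 := by
  rw [pqBeta_zero_zero, Complex.betaIntegral, ← intervalIntegral.integral_ofReal]
  refine intervalIntegral.integral_congr fun t ht => ?_
  rw [Set.uIcc_of_le zero_le_one] at ht
  exact (ofReal_rpow_mul_one_sub_rpow ht.1 ht.2 x y).symm

theorem intervalIntegrable_rpow_mul_one_sub_rpow {x y : ℝ} (hx : 0 < x) (hy : 0 < y) :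
    IntervalIntegrable (fun t : ℝ => t ^ (x - 1) * (1 - t) ^ (y - 1)) volume 0 1 := by
  have h := Complex.betaIntegral_convergent (u := x) (v := y) (by simpa) (by simpa)
  rw [intervalIntegrable_iff_integrableOn_Ioc_of_le zero_le_one] at h ⊢
  refine IntegrableOn.congr_fun h.re (fun t ht => ?_) measurableSet_Ioc
  rw [← ofReal_rpow_mul_one_sub_rpow ht.1.le ht.2, RCLike.re_to_complex, Complex.ofReal_re]

theorem pqBeta_zero_zero_eq_Gamma {x y : ℝ} (hx : 0 < x) (hy : 0 < y) :
    pqBeta x y 0 0 = Gamma x * Gamma y / Gamma (x + y) := by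
  have h := Complex.Gamma_mul_Gamma_eq_betaIntegral (s := x) (t := y) (by simpa) (by simpa)
  rw [betaIntegral_ofReal, ← Complex.ofReal_add, Complex.Gamma_ofReal, Complex.Gamma_ofReal,
    Complex.Gamma_ofReal] at h
  rw [eq_div_iff (Gamma_pos_of_pos (add_pos hx hy)).ne']
  exact_mod_cast (h.trans (mul_comm _ _)).symm

theorem pqBeta_zero_zero_pos {x y : ℝ} (hx : 0 < x) (hy : 0 < y) : 0 < pqBeta x y 0 0 := by
  rw [pqBeta_zero_zero_eq_Gamma hx hy]
  have := Gamma_pos_of_pos hx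
  have := Gamma_pos_of_pos hy
  have := Gamma_pos_of_pos (add_pos hx hy)
  positivity

theorem pqBeta_add_nat_div_pqBeta {x y : ℝ} (hx : 0 < x) (hy : 0 < y) (n : ℕ) :
    pqBeta (x + n) y 0 0 / pqBeta x y 0 0 =
      (ascPochhammer ℝ n).eval x / (ascPochhammer ℝ n).eval (x + y) := by
  have hxy : 0 < x + y := add_pos hx hy
  have not_neg_nat {s : ℝ} (hs : 0 < s) (k : ℕ) : s ≠ -k := by
    have : (0 : ℝ) ≤ k := k.cast_nonneg
    linarith
  rw [pqBeta_zero_zero_eq_Gamma (by positivity) hy, pqBeta_zero_zero_eq_Gamma hx hy,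
    add_right_comm, Gamma_add_nat_eq_ascPochhammer_mul (not_neg_nat hx),
    Gamma_add_nat_eq_ascPochhammer_mul (not_neg_nat hxy)]
  have := (Gamma_pos_of_pos hx).ne'
  have := (Gamma_pos_of_pos hy).ne'
  have := (Gamma_pos_of_pos hxy).ne'
  have := (ascPochhammer_pos n x hx).ne'
  have := (ascPochhammer_pos n _ hxy).ne'
  field_simp

theorem sq_sqrt_add_sqrt_le_div_add_div {p q t : ℝ} (hp : 0 ≤ p) (hq : 0 ≤ q)
    (ht₀ : 0 < t) (ht₁ : t < 1) : (√p + √q) ^ 2 ≤ p / t + q / (1 - t) := by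
  have h := Finset.sq_sum_div_le_sum_sq_div Finset.univ ![√p, √q] (g := ![t, 1 - t])
    (by simp [Fin.forall_fin_two, ht₀, ht₁])
  simpa [Fin.sum_univ_two, sq_sqrt hp, sq_sqrt hq] using h

theorem pqBeta_abs_le {x y p q : ℝ} (hx : 0 < x) (hy : 0 < y) (hp : 0 ≤ p) (hq : 0 ≤ q) :
    |pqBeta x y p q| ≤ exp (-(√p + √q) ^ 2) * pqBeta x y 0 0 := by
  have hweight : ∀ᵐ t ∂volume, t ∈ Set.Ioc (0 : ℝ) 1 →
      ‖t ^ (x - 1) * (1 - t) ^ (y - 1) * exp (-p / t - q / (1 - t))‖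
        ≤ exp (-(√p + √q) ^ 2) * (t ^ (x - 1) * (1 - t) ^ (y - 1)) := by
    filter_upwards [Measure.ae_ne volume 1] with t ht_ne ⟨ht₀, ht₁⟩
    have ht₁ : t < 1 := lt_of_le_of_ne ht₁ ht_ne
    have hexp : exp (-p / t - q / (1 - t)) ≤ exp (-(√p + √q) ^ 2) := by
      rw [exp_le_exp, neg_div, ← neg_add', neg_le_neg_iff]
      exact sq_sqrt_add_sqrt_le_div_add_div hp hq ht₀ ht₁
    have hbase : 0 ≤ t ^ (x - 1) * (1 - t) ^ (y - 1) := by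
      have : 0 < 1 - t := sub_pos.2 ht₁
      positivity
    rw [norm_of_nonneg (by positivity), mul_comm (exp _)]
    exact mul_le_mul_of_nonneg_left hexp hbase
  have h := intervalIntegral.norm_integral_le_of_norm_le zero_le_one hweight
    ((intervalIntegrable_rpow_mul_one_sub_rpow hx hy).const_mul _)
  rwa [intervalIntegral.integral_const_mul, ← pqBeta_zero_zero] at h

noncomputable def pqKummerTerm (b c z p q : ℝ) (n : ℕ) : ℝ :=
  pqBeta (b + n) (c - b) p q / pqBeta b (c - b) 0 0 * z ^ n / n.factorial

noncomputable def oneF1Term (b c z : ℝ) (n : ℕ) : ℝ :=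
  (ascPochhammer ℝ n).eval b / (ascPochhammer ℝ n).eval c * z ^ n / n.factorial

theorem abs_oneF1Term_le {b c : ℝ} (hb : 0 ≤ b) (hbc : b ≤ c) (z : ℝ) (n : ℕ) :
    |oneF1Term b c z n| ≤ |z| ^ n / n.factorial := by
  have hratio₀ : 0 ≤ (ascPochhammer ℝ n).eval b / (ascPochhammer ℝ n).eval c :=
    div_nonneg (ascPochhammer_eval_nonneg n hb) (ascPochhammer_eval_nonneg n (hb.trans hbc))
  have hratio₁ : (ascPochhammer ℝ n).eval b / (ascPochhammer ℝ n).eval c ≤ 1 :=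
    div_le_one_of_le₀ (ascPochhammer_eval_le_eval n hb hbc)
      (ascPochhammer_eval_nonneg n (hb.trans hbc))
  rw [oneF1Term, abs_div, abs_mul, abs_of_nonneg hratio₀, abs_pow, Nat.abs_cast]
  gcongr
  exact mul_le_of_le_one_left (by positivity) hratio₁

theorem summable_oneF1Term {b c : ℝ} (hb : 0 ≤ b) (hbc : b ≤ c) (z : ℝ) :
    Summable (oneF1Term b c z) :=
  .of_norm_bounded (Real.summable_pow_div_factorial |z|) (abs_oneF1Term_le hb hbc z)

theorem abs_pqKummerTerm_le {b c p q : ℝ} (hb : 0 < b) (hbc : b < c) (hp : 0 ≤ p) (hq : 0 ≤ q)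
    (z : ℝ) (n : ℕ) :
    |pqKummerTerm b c z p q n| ≤ exp (-(√p + √q) ^ 2) * oneF1Term b c |z| n := by
  have hcb : 0 < c - b := sub_pos.2 hbc
  have hB := pqBeta_zero_zero_pos hb hcb
  have hratio := pqBeta_add_nat_div_pqBeta hb hcb n
  rw [add_sub_cancel] at hratio
  calc |pqKummerTerm b c z p q n|
      = |pqBeta (b + n) (c - b) p q| * (|z| ^ n / n.factorial / pqBeta b (c - b) 0 0) := by
        rw [pqKummerTerm, abs_div, abs_mul, abs_div, abs_of_pos hB, abs_pow, Nat.abs_cast]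
        ring
    _ ≤ exp (-(√p + √q) ^ 2) * pqBeta (b + n) (c - b) 0 0 *
          (|z| ^ n / n.factorial / pqBeta b (c - b) 0 0) := by
        gcongr
        exact pqBeta_abs_le (by positivity) hcb hp hq
    _ = exp (-(√p + √q) ^ 2) * oneF1Term b c |z| n := by
        rw [oneF1Term, ← hratio]
        ring

theorem pqKummer_abs_le (b c z p q : ℝ) (hb : 0 < b) (hcb : b < c)
    (hp : 0 ≤ p) (hq : 0 ≤ q) :
    |pqKummer b c z p q| ≤
      Real.exp (-(Real.sqrt p + Real.sqrt q) ^ 2) * oneF1 b c |z| := by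
  change ‖∑' n, pqKummerTerm b c z p q n‖ ≤ _ * ∑' n, oneF1Term b c |z| n
  exact tsum_of_norm_bounded ((summable_oneF1Term hb.le hcb.le |z|).hasSum.mul_left _)
    (abs_pqKummerTerm_le hb hcb hp hq z)
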